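/- arXiv:1006.1752 — 2 statements merged into one kernel-verified Lean document; each statement's English description precedes it below -/
import Mathlib

section
/- The only solutions (h_1,…,h_ℓ) ∈ (ℤ_{≥0})^ℓ with ℓ ≥ 3 of the system of equations p_i = (h_1+1)(h_2+1/2)h_i = 0, q_i = (h_1+1)(4h_i + (h_2+h_i)(h_2+h_i−1)) = 0, r_i = 4h_i(h_2+1) + (h_1+h_i−1)(h_2+h_i+h_2(h_1+h_i)) = 0, for all i = 3,…,ℓ, are: (i) h_i = 0 for i ≥ 2 and h_1 = n arbitrary in ℤ_{≥0}; (ii) h_1 = h_2 = 1 and h_i = 0 for i ≥ 3. -/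
/-- the only solutions (h₁,…,h_ℓ) ∈ ℤ_{≥0}^ℓ, ℓ ≥ 3, of the system
pᵢ = (h₁+1)(h₂+1/2)hᵢ = 0, qᵢ = (h₁+1)(4hᵢ + (h₂+hᵢ)(h₂+hᵢ−1)) = 0,
rᵢ = 4hᵢ(h₂+1) + (h₁+hᵢ−1)(h₂+hᵢ+h₂(h₁+hᵢ)) = 0 for all i = 3,…,ℓ are:
(i) hᵢ = 0 for i ≥ 2 (h₁ arbitrary), or (ii) h₁ = h₂ = 1 and hᵢ = 0 for i ≥ 3. -/
theorem stmt_9 (l : ℕ) (hl : 3 ≤ l) (h : ℕ → ℕ) :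
    (∀ i : ℕ, 3 ≤ i → i ≤ l →
      ((h 1 : ℚ) + 1) * ((h 2 : ℚ) + 1/2) * (h i : ℚ) = 0 ∧
      ((h 1 : ℚ) + 1) * (4 * (h i : ℚ) + ((h 2 : ℚ) + (h i : ℚ)) * ((h 2 : ℚ) + (h i : ℚ) - 1)) = 0 ∧
      4 * (h i : ℚ) * ((h 2 : ℚ) + 1) +
        ((h 1 : ℚ) + (h i : ℚ) - 1) * ((h 2 : ℚ) + (h i : ℚ) + (h 2 : ℚ) * ((h 1 : ℚ) + (h i : ℚ))) = 0)
    ↔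
    ((∀ i : ℕ, 2 ≤ i → i ≤ l → h i = 0) ∨
     (h 1 = 1 ∧ h 2 = 1 ∧ ∀ i : ℕ, 3 ≤ i → i ≤ l → h i = 0)) := by
  have h1nn : (0:ℚ) ≤ (h 1 : ℚ) := Nat.cast_nonneg _
  have h2nn : (0:ℚ) ≤ (h 2 : ℚ) := Nat.cast_nonneg _
  constructor
  · intro H
    have hi0 : ∀ i : ℕ, 3 ≤ i → i ≤ l → h i = 0 := by
      intro i h3 hil
      obtain ⟨p, -, -⟩ := H i h3 hil
      have hpos : ((h 1 : ℚ) + 1) * ((h 2 : ℚ) + 1/2) ≠ 0 := by positivity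
      have : (h i : ℚ) = 0 := by
        rcases mul_eq_zero.mp p with hp | hp
        · exact absurd hp hpos
        · exact hp
      exact_mod_cast this
    obtain ⟨-, q3, r3⟩ := H 3 le_rfl hl
    have h30 : (h 3 : ℚ) = 0 := by exact_mod_cast hi0 3 le_rfl hl
    rw [h30] at q3 r3
    have hq : (h 2 : ℚ) * ((h 2 : ℚ) - 1) = 0 := by
      have hne : ((h 1 : ℚ) + 1) ≠ 0 := by positivity
      have := mul_eq_zero.mp q3
      rcases this with hp | hp
      · exact absurd hp hne
      · linarith [hp]
    rcases mul_eq_zero.mp hq with h20 | h21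
    · left
      intro i h2i hil
      rcases Nat.lt_or_ge i 3 with hi | hi
      · have : i = 2 := by omega
        subst this; exact_mod_cast h20
      · exact hi0 i hi hil
    · right
      have h2e : (h 2 : ℚ) = 1 := by linarith
      have h1e : (h 1 : ℚ) = 1 := by
        have : ((h 1 : ℚ) - 1) * (1 + (h 1 : ℚ)) = 0 := by
          rw [h2e] at r3; linarith [r3]; 
        rcases mul_eq_zero.mp this with hp | hp
        · linarith
        · linarith
      exact ⟨by exact_mod_cast h1e, by exact_mod_cast h2e, hi0⟩
  · rintro (H | ⟨h1e, h2e, H⟩) <;> intro i h3 hil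
    · have hi : (h i : ℚ) = 0 := by exact_mod_cast H i (by omega) hil
      have h2z : (h 2 : ℚ) = 0 := by exact_mod_cast H 2 le_rfl (by omega)
      rw [hi, h2z]; norm_num
    · have hi : (h i : ℚ) = 0 := by exact_mod_cast H i h3 hil
      have h1q : (h 1 : ℚ) = 1 := by exact_mod_cast h1e
      have h2q : (h 2 : ℚ) = 1 := by exact_mod_cast h2e
      rw [hi, h1q, h2q]; norm_num
end

section
/- In the Weyl algebra W_{2ℓ}, the determinant-like expression Δ_3 = Σ_{σ∈S_3} sgn(σ) e_{ε_1+ε_{σ(1)}} e_{ε_2+ε_{σ(2)}} e_{ε_3+ε_{σ(3)}} built from the pairwise-commuting elements e_{ε_i+ε_j} := (a_i^+ a_{2ℓ+1-j}^- + a_j^+ a_{2ℓ+1-i}^-)/2 (with e_{2ε_i} := a_i^+ a_{2ℓ+1-i}^-) vanishes, i.e., the 3×3 determinant with (i,j)-entry e_{ε_i+ε_j} (where e_{ε_i+ε_i} := e_{2ε_i}) is zero in W_{2ℓ}, for ℓ ≥ 3. -/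
lemma det3_comm {A : Type*} [Ring A] (x1 x2 x3 y1 y2 y3 : A)
    (h : ∀ a ∈ ({x1, x2, x3, y1, y2, y3} : Set A),
         ∀ b ∈ ({x1, x2, x3, y1, y2, y3} : Set A), a * b = b * a) :
    (x1*y1 + x1*y1) * (x2*y2 + x2*y2) * (x3*y3 + x3*y3)
      + (x1*y2 + x2*y1) * (x2*y3 + x3*y2) * (x3*y1 + x1*y3)
      + (x1*y3 + x3*y1) * (x2*y1 + x1*y2) * (x3*y2 + x2*y3)
      - (x1*y3 + x3*y1) * (x2*y2 + x2*y2) * (x3*y1 + x1*y3)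
      - (x1*y1 + x1*y1) * (x2*y3 + x3*y2) * (x3*y2 + x2*y3)
      - (x1*y2 + x2*y1) * (x2*y1 + x1*y2) * (x3*y3 + x3*y3) = 0 := by
  letI : CommRing (Subring.closure ({x1, x2, x3, y1, y2, y3} : Set A)) :=
    Subring.closureCommRingOfComm h
  let X1 : Subring.closure ({x1, x2, x3, y1, y2, y3} : Set A) := ⟨x1, Subring.subset_closure (by simp)⟩
  let X2 : Subring.closure ({x1, x2, x3, y1, y2, y3} : Set A) := ⟨x2, Subring.subset_closure (by simp)⟩
  let X3 : Subring.closure ({x1, x2, x3, y1, y2, y3} : Set A) := ⟨x3, Subring.subset_closure (by simp)⟩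
  let Y1 : Subring.closure ({x1, x2, x3, y1, y2, y3} : Set A) := ⟨y1, Subring.subset_closure (by simp)⟩
  let Y2 : Subring.closure ({x1, x2, x3, y1, y2, y3} : Set A) := ⟨y2, Subring.subset_closure (by simp)⟩
  let Y3 : Subring.closure ({x1, x2, x3, y1, y2, y3} : Set A) := ⟨y3, Subring.subset_closure (by simp)⟩
  have key : (X1*Y1 + X1*Y1) * (X2*Y2 + X2*Y2) * (X3*Y3 + X3*Y3)
      + (X1*Y2 + X2*Y1) * (X2*Y3 + X3*Y2) * (X3*Y1 + X1*Y3)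
      + (X1*Y3 + X3*Y1) * (X2*Y1 + X1*Y2) * (X3*Y2 + X2*Y3)
      - (X1*Y3 + X3*Y1) * (X2*Y2 + X2*Y2) * (X3*Y1 + X1*Y3)
      - (X1*Y1 + X1*Y1) * (X2*Y3 + X3*Y2) * (X3*Y2 + X2*Y3)
      - (X1*Y2 + X2*Y1) * (X2*Y1 + X1*Y2) * (X3*Y3 + X3*Y3) = 0 := by ring
  exact congrArg Subtype.val key

/-- in the Weyl algebra W_{2ℓ} (ℓ ≥ 3), the 3×3 determinant with (i,j)-entry
e_{εᵢ+εⱼ} := (aᵢ⁺a_{2ℓ+1−j}⁻ + aⱼ⁺a_{2ℓ+1−i}⁻)/2 (and e_{2εᵢ} := aᵢ⁺a_{2ℓ+1−i}⁻ on the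
diagonal) vanishes. -/
theorem stmt_18 (l : ℕ) (hl : 3 ≤ l) (A : Type*) [Ring A] [Algebra ℂ A] (ap am : ℕ → A)
    (hpm : ∀ i j : ℕ, 1 ≤ i → i ≤ 2 * l → 1 ≤ j → j ≤ 2 * l →
      ap i * am j - am j * ap i = if i = j then 1 else 0)
    (hpp : ∀ i j : ℕ, 1 ≤ i → i ≤ 2 * l → 1 ≤ j → j ≤ 2 * l → ap i * ap j = ap j * ap i)
    (hmm : ∀ i j : ℕ, 1 ≤ i → i ≤ 2 * l → 1 ≤ j → j ≤ 2 * l → am i * am j = am j * am i) :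
    let E : ℕ → ℕ → A := fun i j =>
      if i = j then ap i * am (2 * l + 1 - i)
      else (2 : ℂ)⁻¹ • (ap i * am (2 * l + 1 - j) + ap j * am (2 * l + 1 - i))
    E 1 1 * E 2 2 * E 3 3 + E 1 2 * E 2 3 * E 3 1 + E 1 3 * E 2 1 * E 3 2
      - E 1 3 * E 2 2 * E 3 1 - E 1 1 * E 2 3 * E 3 2 - E 1 2 * E 2 1 * E 3 3 = 0 := by
  intro E
  have hcpm : ∀ i k : ℕ, 1 ≤ i → i ≤ 2 * l → 1 ≤ k → k ≤ 2 * l → i ≠ k →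
      ap i * am k = am k * ap i := by
    intro i k h1 h2 h3 h4 hne
    have h5 := hpm i k h1 h2 h3 h4
    rw [if_neg hne] at h5
    exact sub_eq_zero.mp h5
  have hcomm : ∀ a ∈ ({ap 1, ap 2, ap 3, am (2*l+1-1), am (2*l+1-2), am (2*l+1-3)} : Set A),
      ∀ b ∈ ({ap 1, ap 2, ap 3, am (2*l+1-1), am (2*l+1-2), am (2*l+1-3)} : Set A),
      a * b = b * a := by
    intro a ha b hb
    simp only [Set.mem_insert_iff, Set.mem_singleton_iff] at ha hb
    rcases ha with rfl|rfl|rfl|rfl|rfl|rfl <;> rcases hb with rfl|rfl|rfl|rfl|rfl|rfl <;>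
      first
        | rfl
        | exact hpp _ _ (by omega) (by omega) (by omega) (by omega)
        | exact hmm _ _ (by omega) (by omega) (by omega) (by omega)
        | exact hcpm _ _ (by omega) (by omega) (by omega) (by omega) (by omega)
        | exact (hcpm _ _ (by omega) (by omega) (by omega) (by omega) (by omega)).symm
  have key := det3_comm (ap 1) (ap 2) (ap 3)
    (am (2*l+1-1)) (am (2*l+1-2)) (am (2*l+1-3)) hcomm
  have e11 : E 1 1 = ap 1 * am (2*l+1-1) := by simp only [E, if_pos rfl]
  have e22 : E 2 2 = ap 2 * am (2*l+1-2) := by simp only [E, if_pos rfl]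
  have e33 : E 3 3 = ap 3 * am (2*l+1-3) := by simp only [E, if_pos rfl]
  have e12 : E 1 2 = (2:ℂ)⁻¹ • (ap 1 * am (2*l+1-2) + ap 2 * am (2*l+1-1)) := by
    simp only [E, if_neg (by norm_num : (1:ℕ) ≠ 2)]
  have e13 : E 1 3 = (2:ℂ)⁻¹ • (ap 1 * am (2*l+1-3) + ap 3 * am (2*l+1-1)) := by
    simp only [E, if_neg (by norm_num : (1:ℕ) ≠ 3)]
  have e21 : E 2 1 = (2:ℂ)⁻¹ • (ap 2 * am (2*l+1-1) + ap 1 * am (2*l+1-2)) := by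
    simp only [E, if_neg (by norm_num : (2:ℕ) ≠ 1)]
  have e23 : E 2 3 = (2:ℂ)⁻¹ • (ap 2 * am (2*l+1-3) + ap 3 * am (2*l+1-2)) := by
    simp only [E, if_neg (by norm_num : (2:ℕ) ≠ 3)]
  have e31 : E 3 1 = (2:ℂ)⁻¹ • (ap 3 * am (2*l+1-1) + ap 1 * am (2*l+1-3)) := by
    simp only [E, if_neg (by norm_num : (3:ℕ) ≠ 1)]
  have e32 : E 3 2 = (2:ℂ)⁻¹ • (ap 3 * am (2*l+1-2) + ap 2 * am (2*l+1-3)) := by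
    simp only [E, if_neg (by norm_num : (3:ℕ) ≠ 2)]
  rw [e11, e22, e33, e12, e13, e21, e23, e31, e32]
  have d : ∀ z : A, z = (2:ℂ)⁻¹ • (z + z) := by
    intro z
    rw [← two_smul ℂ z, inv_smul_smul₀ (by norm_num : (2:ℂ) ≠ 0)]
  rw [d (ap 1 * am (2*l+1-1)), d (ap 2 * am (2*l+1-2)), d (ap 3 * am (2*l+1-3))]
  simp only [smul_mul_assoc, mul_smul_comm, smul_smul]
  rw [← smul_add, ← smul_add, ← smul_sub, ← smul_sub, ← smul_sub, key, smul_zero]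
end
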